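/- Second $\mathrm{SLE}_0$ observable. Let $I\subseteq\mathbb{R}$ be an interval and let $u_0, u_1, u_2, u_3 : I \to \mathbb{C}$ be differentiable with $u_0(t)\notin\{0,1\}$ and $u_1(t)\ne 0$ for all $t$, satisfying $u_0' = v(u_0)$, $u_1' = v'(u_0)u_1$, $u_2' = v''(u_0)u_1^2 + v'(u_0)u_2$, and $u_3' = v'''(u_0)u_1^3 + 3v''(u_0)u_1u_2 + v'(u_0)u_3$, where $v(u) = u\dfrac{1+u}{1-u}$, $v'(u) = \dfrac{2}{(1-u)^2}-1$, $v''(u) = \dfrac{4}{(1-u)^3}$, $v'''(u) = \dfrac{12}{(1-u)^4}$. Then the function $t \mapsto \dfrac{u_3(t)}{u_1(t)} - \dfrac{3}{2}\left(\dfrac{u_2(t)}{u_1(t)}\right)^2 + \dfrac{3}{8}\,\dfrac{u_1(t)^2}{u_0(t)^2}\left(1 - \dfrac{4\,u_0(t)}{(1-u_0(t))^2}\right)$ is constant on $I$. -/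

import Mathlib

/-!
Along the flow of a holomorphic vector field `v`, with `u₀ = w`, `u₁ = w'`, `u₂ = w''`,
`u₃ = w'''`, the Schwarzian `u₃/u₁ - (3/2)(u₂/u₁)²` has time derivative `v'''(u₀) u₁²`, while a
quadratic differential `Q(u₀) u₁²` has time derivative `(Q' v + 2 Q v')(u₀) u₁²`. For the radial
Loewner field `v(u) = u (1+u)/(1-u)` the function `Q(u) = (3/8) u⁻² (1 - 4u/(1-u)²)` solves
`Q' v + 2 Q v' = -v'''`, so the sum has zero derivative and is constant on the interval.
-/

theorem Set.OrdConnected.eq_of_hasDerivAt_eq_zero {E : Type*} [NormedAddCommGroup E]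
    [NormedSpace ℝ E] {I : Set ℝ} (hI : I.OrdConnected) {f : ℝ → E}
    (hf : ∀ t ∈ I, HasDerivAt f 0 t) {s t : ℝ} (hs : s ∈ I) (ht : t ∈ I) : f s = f t := by
  have h := hI.convex.norm_image_sub_le_of_norm_hasDerivWithin_le
    (fun x hx => (hf x hx).hasDerivWithinAt) (fun _ _ => (norm_zero (E := E)).le) ht hs
  rwa [zero_mul, norm_le_zero_iff, sub_eq_zero] at h

section Flow

variable {𝕜 𝕜' : Type*} [NontriviallyNormedField 𝕜] [NontriviallyNormedField 𝕜']
  [NormedAlgebra 𝕜 𝕜'] {u₀ u₁ u₂ u₃ : 𝕜 → 𝕜'} {t : 𝕜} {a₁ a₂ a₃ : 𝕜'}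

theorem hasDerivAt_schwarzian_of_flow [CharZero 𝕜'] (h₁ : u₁ t ≠ 0)
    (hd₁ : HasDerivAt u₁ (a₁ * u₁ t) t)
    (hd₂ : HasDerivAt u₂ (a₂ * u₁ t ^ 2 + a₁ * u₂ t) t)
    (hd₃ : HasDerivAt u₃ (a₃ * u₁ t ^ 3 + 3 * a₂ * u₁ t * u₂ t + a₁ * u₃ t) t) :
    HasDerivAt (fun s => u₃ s / u₁ s - 3 / 2 * (u₂ s / u₁ s) ^ 2) (a₃ * u₁ t ^ 2) t := by
  refine ((hd₃.fun_div hd₁ h₁).sub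
    (((hd₂.fun_div hd₁ h₁).fun_pow 2).const_mul (3 / 2))).congr_deriv ?_
  push_cast
  field_simp
  ring

theorem hasDerivAt_quadraticDifferential_of_flow {Q : 𝕜' → 𝕜'} {q v : 𝕜'}
    (hQ : HasDerivAt Q q (u₀ t)) (hd₀ : HasDerivAt u₀ v t) (hd₁ : HasDerivAt u₁ (a₁ * u₁ t) t) :
    HasDerivAt (fun s => Q (u₀ s) * u₁ s ^ 2) ((q * v + 2 * Q (u₀ t) * a₁) * u₁ t ^ 2) t := by
  refine ((hQ.comp t hd₀).mul (hd₁.fun_pow 2)).congr_deriv ?_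
  simp only [Function.comp_apply]
  ring

end Flow

noncomputable def radialSchwarzianCorrection (u : ℂ) : ℂ :=
  3 / 8 / u ^ 2 * (1 - 4 * u / (1 - u) ^ 2)

theorem hasDerivAt_radialSchwarzianCorrection {u : ℂ} (h₀ : u ≠ 0) (h₁ : u ≠ 1) :
    HasDerivAt radialSchwarzianCorrection
      (3 / 8 * (-2 / u ^ 3 + 4 / (u ^ 2 * (1 - u) ^ 2) - 8 / (u * (1 - u) ^ 3))) u := by
  have h₁' : 1 - u ≠ 0 := sub_ne_zero.mpr h₁.symm
  have hsq := ((hasDerivAt_id' u).const_sub 1).fun_pow 2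
  refine (((hasDerivAt_const u (3 / 8 : ℂ)).fun_div ((hasDerivAt_id' u).fun_pow 2)
    (pow_ne_zero 2 h₀)).mul ((((hasDerivAt_id' u).const_mul 4).fun_div hsq
      (pow_ne_zero 2 h₁')).const_sub 1)).congr_deriv ?_
  push_cast
  field_simp
  ring

theorem radialSchwarzianCorrection_lieDeriv {u : ℂ} (h₀ : u ≠ 0) (h₁ : u ≠ 1) :
    3 / 8 * (-2 / u ^ 3 + 4 / (u ^ 2 * (1 - u) ^ 2) - 8 / (u * (1 - u) ^ 3))
        * (u * ((1 + u) / (1 - u))) + 2 * radialSchwarzianCorrection u * (2 / (1 - u) ^ 2 - 1)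
      = -(12 / (1 - u) ^ 4) := by
  have h₁' : 1 - u ≠ 0 := sub_ne_zero.mpr h₁.symm
  unfold radialSchwarzianCorrection
  field_simp
  ring

/-- Second SLE₀ observable: with `u_k = ∂_z^k w_t(z)` evolving under
the radial Loewner flow at κ = 0 (vector field `v(u) = u (1+u)/(1-u)`), the quantity
`u₃/u₁ - (3/2)(u₂/u₁)² + (3/8)(u₁²/u₀²)(1 - 4u₀/(1-u₀)²)`, i.e.
`S_w + (3/8)(w'/w)²(1 - 4w/(1-w)²)`, is constant. -/
theorem sle0_second_observable (I : Set ℝ) (hI : I.OrdConnected)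
    (u₀ u₁ u₂ u₃ : ℝ → ℂ)
    (h₀ : ∀ t ∈ I, u₀ t ≠ 0 ∧ u₀ t ≠ 1)
    (h₁ : ∀ t ∈ I, u₁ t ≠ 0)
    (hd₀ : ∀ t ∈ I, HasDerivAt u₀ (u₀ t * ((1 + u₀ t) / (1 - u₀ t))) t)
    (hd₁ : ∀ t ∈ I, HasDerivAt u₁ ((2 / (1 - u₀ t) ^ 2 - 1) * u₁ t) t)
    (hd₂ : ∀ t ∈ I, HasDerivAt u₂
      ((4 / (1 - u₀ t) ^ 3) * (u₁ t) ^ 2 + (2 / (1 - u₀ t) ^ 2 - 1) * u₂ t) t)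
    (hd₃ : ∀ t ∈ I, HasDerivAt u₃
      ((12 / (1 - u₀ t) ^ 4) * (u₁ t) ^ 3 + 3 * (4 / (1 - u₀ t) ^ 3) * u₁ t * u₂ t
        + (2 / (1 - u₀ t) ^ 2 - 1) * u₃ t) t) :
    ∀ s ∈ I, ∀ t ∈ I,
      u₃ s / u₁ s - (3/2) * (u₂ s / u₁ s) ^ 2
          + (3/8) * ((u₁ s) ^ 2 / (u₀ s) ^ 2) * (1 - 4 * u₀ s / (1 - u₀ s) ^ 2) =
      u₃ t / u₁ t - (3/2) * (u₂ t / u₁ t) ^ 2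
          + (3/8) * ((u₁ t) ^ 2 / (u₀ t) ^ 2) * (1 - 4 * u₀ t / (1 - u₀ t) ^ 2) := by
  intro s hs t ht
  have hderiv : ∀ x ∈ I, HasDerivAt (fun y => u₃ y / u₁ y - 3 / 2 * (u₂ y / u₁ y) ^ 2
      + radialSchwarzianCorrection (u₀ y) * u₁ y ^ 2) 0 x := by
    intro x hx
    obtain ⟨hx₀, hx₁⟩ := h₀ x hx
    have hS := hasDerivAt_schwarzian_of_flow (h₁ x hx) (hd₁ x hx) (hd₂ x hx) (hd₃ x hx)
    have hQ := hasDerivAt_quadraticDifferential_of_flow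
      (hasDerivAt_radialSchwarzianCorrection hx₀ hx₁) (hd₀ x hx) (hd₁ x hx)
    refine (hS.add hQ).congr_deriv ?_
    rw [radialSchwarzianCorrection_lieDeriv hx₀ hx₁]
    ring
  have hconst := hI.eq_of_hasDerivAt_eq_zero hderiv hs ht
  unfold radialSchwarzianCorrection at hconst
  linear_combination hconst
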